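/- arXiv:1309.7025 — 8 statements merged into one kernel-verified Lean document; each statement's English description precedes it below -/
import Mathlib

section
/- For all integers n ≥ 2 and k ≥ 2, the graph W_{n,k} is vertex-transitive: for any two vertices u and u' of W_{n,k} there is a graph automorphism of W_{n,k} mapping u to u'. -/
open Polynomial

/-- Vertex set of `W n k`: `Sum.inl (i, j)` is the vertex `v_{i,j}` and
`Sum.inr (i, j)` is the vertex `w_{i,j}`, for `i ∈ ℤ/nℤ` and `j ∈ {1, …, k}`. -/
abbrev WVert (n k : ℕ) : Type := (ZMod n × Fin k) ⊕ (ZMod n × Fin k)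

/-- Adjacency of `W n k`: `v_{i,j} ~ w_{i',l}` iff `i' = i`, or `i = i' + 1` and `j = l`. -/
def WAdj (n k : ℕ) : WVert n k → WVert n k → Prop
  | Sum.inl p, Sum.inr q => q.1 = p.1 ∨ (p.1 = q.1 + 1 ∧ p.2 = q.2)
  | Sum.inr q, Sum.inl p => q.1 = p.1 ∨ (p.1 = q.1 + 1 ∧ p.2 = q.2)
  | Sum.inl _, Sum.inl _ => False
  | Sum.inr _, Sum.inr _ => False

/-- The graph `W_{n,k}`: vertices `v_{i,j}` and `w_{i,j}` (`i ∈ ℤ/nℤ`, `1 ≤ j ≤ k`),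
with edges `v_{i,j} w_{i,l}` for all `i, j, l`, and `w_{i,j} v_{i+1,j}` for all `i, j`. -/
def W (n k : ℕ) : SimpleGraph (WVert n k) where
  Adj := WAdj n k
  symm := by
    constructor
    rintro (p | p) (q | q) h
    · exact h.elim
    · exact h
    · exact h
    · exact h.elim
  loopless := by constructor; rintro (p | p) h <;> exact h

instance (n k : ℕ) : DecidableRel (WAdj n k) := fun a b =>
  match a, b with
  | Sum.inl p, Sum.inr q =>
      inferInstanceAs (Decidable (q.1 = p.1 ∨ (p.1 = q.1 + 1 ∧ p.2 = q.2)))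
  | Sum.inr q, Sum.inl p =>
      inferInstanceAs (Decidable (q.1 = p.1 ∨ (p.1 = q.1 + 1 ∧ p.2 = q.2)))
  | Sum.inl _, Sum.inl _ => inferInstanceAs (Decidable False)
  | Sum.inr _, Sum.inr _ => inferInstanceAs (Decidable False)

instance (n k : ℕ) : DecidableRel (W n k).Adj :=
  inferInstanceAs (DecidableRel (WAdj n k))

/-!
The cyclic rotations `i ↦ i + a` and the permutations of the columns `j` act transitively on
the `v`-vertices, and the reflection `v_{i,j} ↦ w_{-i,j}`, `w_{i,j} ↦ v_{-i,j}` exchanges the two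
sides; together they act transitively on all vertices.
-/

lemma neg_eq_neg_add_iff {G : Type*} [AddCommGroup G] (a b c : G) :
    -a = -b + c ↔ b = a + c := by
  rw [neg_eq_iff_eq_neg, neg_add, neg_neg, eq_comm, add_comm, neg_add_eq_iff_eq_add, add_comm c]

namespace W

variable {n k : ℕ}

@[simp] lemma adj_inl_inr (p q : ZMod n × Fin k) :
    (W n k).Adj (Sum.inl p) (Sum.inr q) ↔ q.1 = p.1 ∨ (p.1 = q.1 + 1 ∧ p.2 = q.2) := Iff.rfl

@[simp] lemma adj_inr_inl (p q : ZMod n × Fin k) :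
    (W n k).Adj (Sum.inr q) (Sum.inl p) ↔ q.1 = p.1 ∨ (p.1 = q.1 + 1 ∧ p.2 = q.2) := Iff.rfl

@[simp] lemma not_adj_inl_inl (p q : ZMod n × Fin k) : ¬(W n k).Adj (Sum.inl p) (Sum.inl q) :=
  id

@[simp] lemma not_adj_inr_inr (p q : ZMod n × Fin k) : ¬(W n k).Adj (Sum.inr p) (Sum.inr q) :=
  id

def rotate (a : ZMod n) : W n k ≃g W n k where
  toEquiv := let e := (Equiv.addRight a).prodCongr (Equiv.refl (Fin k)); e.sumCongr e
  map_rel_iff' := by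
    rintro (⟨i, j⟩ | ⟨i, j⟩) (⟨i', j'⟩ | ⟨i', j'⟩) <;> simp [add_right_comm _ a 1]

def permuteColumns (σ : Equiv.Perm (Fin k)) : W n k ≃g W n k where
  toEquiv := let e := (Equiv.refl (ZMod n)).prodCongr σ; e.sumCongr e
  map_rel_iff' := by
    rintro (⟨i, j⟩ | ⟨i, j⟩) (⟨i', j'⟩ | ⟨i', j'⟩) <;> simp

def reflect : W n k ≃g W n k where
  toEquiv := let e := (Equiv.neg (ZMod n)).prodCongr (Equiv.refl (Fin k))
    (Equiv.sumComm _ _).trans (e.sumCongr e)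
  map_rel_iff' := by
    rintro (⟨i, j⟩ | ⟨i, j⟩) (⟨i', j'⟩ | ⟨i', j'⟩) <;>
      simp [neg_eq_neg_add_iff, eq_comm (a := i), eq_comm (a := j)]

lemma exists_apply_inl_zero_eq (j₀ : Fin k) (u : WVert n k) :
    ∃ φ : W n k ≃g W n k, φ (Sum.inl (0, j₀)) = u := by
  rcases u with ⟨i, j⟩ | ⟨i, j⟩
  · exact ⟨(permuteColumns (Equiv.swap j₀ j)).trans (rotate i), by simp [permuteColumns, rotate]⟩
  · refine ⟨((permuteColumns (Equiv.swap j₀ j)).trans (rotate (-i))).trans reflect, ?_⟩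
    simp [permuteColumns, rotate, reflect]

end W

theorem W_vertexTransitive_general (n k : ℕ)
    (u u' : WVert n k) :
    ∃ φ : W n k ≃g W n k, φ u = u' := by
  obtain ⟨j₀⟩ : Nonempty (Fin k) := by rcases u with ⟨-, j⟩ | ⟨-, j⟩ <;> exact ⟨j⟩
  obtain ⟨φ, rfl⟩ := W.exists_apply_inl_zero_eq j₀ u
  obtain ⟨ψ, rfl⟩ := W.exists_apply_inl_zero_eq j₀ u'
  exact ⟨φ.symm.trans ψ, by simp⟩

/-- `W_{n,k}` is vertex-transitive: any vertex can be mapped to any other vertex by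
a graph automorphism. -/
theorem W_vertexTransitive (n k : ℕ) [NeZero n] (hn : 2 ≤ n) (hk : 2 ≤ k)
    (u u' : WVert n k) :
    ∃ φ : W n k ≃g W n k, φ u = u' :=
  W_vertexTransitive_general n k u u'
end

section
/- For all integers n ≥ 2 and k ≥ 2, the characteristic polynomial of the adjacency matrix of W_{n,k} over ℝ equals (X² − 1)^{(k−1)n} · ∏_{j=0}^{n−1} ( X² − (k² + 1 + 2k·cos(2πj/n)) ). Equivalently, the spectrum of W_{n,k} consists of the eigenvalues 1 and −1, each with multiplicity (k−1)n, together with the pairs ±τ_j for j = 0, …, n−1, where τ_j = √(k² + 1 + 2k·cos(2πj/n)). -/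
open Polynomial

/-!
The adjacency matrix of `W n k` is bipartite, `[[0, B], [Bᵀ, 0]]`, so its characteristic
polynomial is that of `B Bᵀ` composed with `X²`. Counting common neighbours gives
`B Bᵀ = 1 + C ⊗ J`, where `J` is the all-ones `k × k` matrix and `C = k + S + S⁻¹` is circulant,
`S` being the cyclic shift of `ℤ/nℤ`. Writing `C ⊗ J = U C Uᵀ` with `Uᵀ U = k`, Sylvester's
identity `charpoly (U M) = X ^ _ * charpoly (M U)` trades `C ⊗ J` for `k C` at the cost of the
factor `X ^ ((k - 1) n)`, i.e. the eigenvalue `±1` of multiplicity `(k - 1) n`. Finally the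
Fourier matrix `(ζ ^ (i j))` diagonalises the circulant `k C`, with eigenvalues
`k (k + 2 cos (2π j / n))`.
-/

open Matrix Finset

namespace ZMod

variable {N : ℕ} [NeZero N]

lemma prod_univ_eq_prod_range {M : Type*} [CommMonoid M] (f : ZMod N → M) :
    ∏ j, f j = ∏ j ∈ range N, f j :=
  prod_nbij' val (↑) (fun j _ => mem_range.mpr (val_lt j)) (fun _ _ => mem_univ _)
    (fun j _ => natCast_zmod_val j) (fun _ hj => val_cast_of_lt (mem_range.mp hj))
    (fun j _ => by rw [natCast_zmod_val])

lemma dft_single {E : Type*} [AddCommGroup E] [Module ℂ E] (m : ZMod N) (c : E) :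
    𝓕 (Pi.single m c) = fun j => stdAddChar (-(m * j)) • c := by
  ext j
  simp [dft_apply, Pi.single_apply]

lemma stdAddChar_add_stdAddChar_neg (j : ℤ) :
    stdAddChar (j : ZMod N) + stdAddChar (-j : ZMod N) = 2 * Real.cos (2 * Real.pi * j / N) := by
  rw [← Int.cast_neg, stdAddChar_coe, stdAddChar_coe, Complex.ofReal_cos, Complex.two_cos]
  push_cast
  ring_nf

variable (N) in
noncomputable def dftMatrix : Matrix (ZMod N) (ZMod N) ℂ :=
  of fun i j => stdAddChar (i * j)

lemma circulant_mul_dftMatrix (v : ZMod N → ℂ) :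
    circulant v * dftMatrix N = dftMatrix N * diagonal (𝓕 v) := by
  ext i j
  rw [mul_diagonal, mul_apply, dftMatrix, of_apply, dft_apply, mul_sum,
    ← (Equiv.subLeft i).sum_comp]
  refine sum_congr rfl fun m _ => ?_
  rw [circulant_apply, of_apply, Equiv.subLeft_apply, sub_sub_cancel, sub_mul, sub_eq_add_neg,
    AddChar.map_add_eq_mul, smul_eq_mul, mul_comm m j]
  ring

lemma dftMatrix_mul_map_star : dftMatrix N * (dftMatrix N).map star = (N : ℂ) • 1 := by
  ext i j
  have h := AddChar.sum_mulShift (i - j) (isPrimitive_stdAddChar N)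
  simp only [sub_eq_zero, ZMod.card] at h
  simp only [mul_apply, dftMatrix, map_apply, of_apply, Complex.star_def,
    ← AddChar.map_neg_eq_conj, ← AddChar.map_add_eq_mul, Matrix.smul_apply, one_apply]
  convert h using 3 with l
  · ring_nf
  · split_ifs <;> simp

lemma charpoly_circulant (v : ZMod N → ℂ) :
    (circulant v).charpoly = ∏ j, (X - C (𝓕 v j)) := by
  set F := dftMatrix N
  set G := (N : ℂ)⁻¹ • F.map star
  have hFG : F * G = 1 := by
    rw [Matrix.mul_smul, dftMatrix_mul_map_star, smul_smul,
      inv_mul_cancel₀ (Nat.cast_ne_zero.mpr (NeZero.ne N)), one_smul]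
  have hGF : G * F = 1 := mul_eq_one_comm.mp hFG
  calc (circulant v).charpoly = (F * (diagonal (𝓕 v) * G)).charpoly := by
        rw [← Matrix.mul_assoc, ← circulant_mul_dftMatrix, Matrix.mul_assoc, hFG, Matrix.mul_one]
    _ = (diagonal (𝓕 v)).charpoly := by
        rw [charpoly_mul_comm, Matrix.mul_assoc, hGF, Matrix.mul_one]
    _ = ∏ j, (X - C (𝓕 v j)) := charpoly_diagonal _

lemma charpoly_circulant_cycle (a b : ℝ) :
    (circulant (Pi.single 0 a + Pi.single 1 b + Pi.single (-1) b : ZMod N → ℝ)).charpoly =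
      ∏ j ∈ range N, (X - C (a + 2 * b * Real.cos (2 * Real.pi * j / N))) := by
  apply map_injective (algebraMap ℝ ℂ) RCLike.ofReal_injective
  rw [← charpoly_map, map_circulant, charpoly_circulant, prod_univ_eq_prod_range,
    Polynomial.map_prod]
  refine prod_congr rfl fun j _ => ?_
  have hv : (fun i => algebraMap ℝ ℂ
      ((Pi.single 0 a + Pi.single 1 b + Pi.single (-1) b : ZMod N → ℝ) i)) =
      Pi.single 0 (a : ℂ) + Pi.single 1 (b : ℂ) + Pi.single (-1) (b : ℂ) := by
    funext m
    simp only [Pi.add_apply, map_add, Pi.single_apply, apply_ite (algebraMap ℝ ℂ), map_zero]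
    rfl
  have hcos := stdAddChar_add_stdAddChar_neg (N := N) j
  simp only [Int.cast_natCast] at hcos
  rw [hv, map_add, map_add, dft_single, dft_single, dft_single]
  simp only [Polynomial.map_sub, map_X, map_C]
  congr 2
  simp only [Pi.add_apply, zero_mul, neg_zero, AddChar.map_zero_eq_one, one_mul, neg_mul, neg_neg,
    smul_eq_mul, Complex.coe_algebraMap, Complex.ofReal_add, Complex.ofReal_mul,
    Complex.ofReal_ofNat]
  linear_combination (b : ℂ) * hcos

end ZMod

namespace Matrix

variable {ι κ R : Type*} [Fintype ι] [DecidableEq ι] [Fintype κ] [DecidableEq κ] [CommRing R]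

lemma charpoly_comp (M : Matrix ι ι R) (p : R[X]) :
    M.charpoly.comp p = (scalar ι p - M.map C).det := by
  rw [charpoly, ← coe_compRingHom_apply, RingHom.map_det]
  congr 1
  ext i j
  by_cases h : i = j <;> simp [h]

lemma charpoly_add_one (M : Matrix ι ι R) : (M + 1).charpoly = M.charpoly.comp (X - 1) := by
  simpa [sub_eq_add_neg] using charpoly_sub_scalar M (-1)

lemma charpoly_fromBlocks_zero₁₁_zero₂₂ (M N : Matrix ι ι R) :
    (fromBlocks 0 M N 0).charpoly = (M * N).charpoly.comp (X ^ 2) := by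
  set S := scalar ι (X : R[X])
  have hchar : charmatrix (fromBlocks 0 M N 0) = fromBlocks S (-M.map C) (-N.map C) S := by
    ext (i | i) (j | j) <;> by_cases h : i = j <;> simp [S, h]
  -- Row reduction with `[[1, 0], [N, X]]`, legitimate because the scalar `X` commutes with `N`.
  have hmul : fromBlocks 1 0 (N.map C) S * fromBlocks S (-M.map C) (-N.map C) S =
      fromBlocks S (-M.map C) 0 (scalar ι (X ^ 2) - (N * M).map C) := by
    have hNS : N.map C * S = S * N.map C := (scalar_commute _ (fun _ => Commute.all _ _) _).symm.eq
    rw [fromBlocks_multiply]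
    congr 1
    · simp
    · simp
    · rw [mul_neg, hNS, add_neg_cancel]
    · simp [S, Matrix.map_mul, sq, sub_eq_neg_add]
  have hdet := congrArg det hmul
  have hS : S.det = X ^ Fintype.card ι := by simp [S]
  rw [det_mul, det_fromBlocks_zero₁₂, det_fromBlocks_zero₂₁, det_one, one_mul, ← hchar,
    ← charpoly_comp, hS] at hdet
  rw [charpoly, (isRegular_X_pow _).left hdet, charpoly_mul_comm]

-- `M.submatrix Prod.fst Prod.fst` is the Kronecker product of `M` with the all-ones matrix.
lemma charpoly_submatrix_fst [Nonempty κ] (M : Matrix ι ι R) :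
    (M.submatrix Prod.fst Prod.fst : Matrix (ι × κ) (ι × κ) R).charpoly =
      X ^ (Fintype.card ι * (Fintype.card κ - 1)) * ((Fintype.card κ : R) • M).charpoly := by
  set U : Matrix (ι × κ) ι R := of fun p i => if p.1 = i then 1 else 0
  have hM : M.submatrix Prod.fst Prod.fst = U * (M * Uᵀ) := by
    ext p q
    simp [U, mul_apply]
  have hU : Uᵀ * U = (Fintype.card κ : R) • 1 := by
    ext i j
    obtain rfl | h := eq_or_ne i j
    · simp [U, mul_apply, Fintype.sum_prod_type]
    · simp [U, mul_apply, Fintype.sum_prod_type, h, h.symm]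
  have hcard : Fintype.card ι ≤ Fintype.card (ι × κ) := by
    rw [Fintype.card_prod]
    exact Nat.le_mul_of_pos_right _ Fintype.card_pos
  rw [hM, charpoly_mul_comm_of_le _ _ hcard, Matrix.mul_assoc, hU, Matrix.mul_smul, Matrix.mul_one,
    Fintype.card_prod, Nat.mul_sub_one]

end Matrix

section

variable (n k : ℕ) (R : Type*) [CommRing R]

def WBiadj : Matrix (ZMod n × Fin k) (ZMod n × Fin k) R :=
  of fun p q => if (W n k).Adj (.inl p) (.inr q) then 1 else 0

lemma adjMatrix_W : (W n k).adjMatrix R = fromBlocks 0 (WBiadj n k R) (WBiadj n k R)ᵀ 0 := by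
  ext (p | p) (q | q)
  · simp only [SimpleGraph.adjMatrix_apply, fromBlocks_apply₁₁, Matrix.zero_apply]
    exact if_neg False.elim
  · rfl
  · simp [WBiadj, SimpleGraph.adjMatrix_apply, (W n k).adj_comm (.inr p)]
  · simp only [SimpleGraph.adjMatrix_apply, fromBlocks_apply₂₂, Matrix.zero_apply]
    exact if_neg False.elim

variable {n k R}

lemma WBiadj_apply (hn : 2 ≤ n) (p q : ZMod n × Fin k) :
    WBiadj n k R p q =
      (if q.1 = p.1 then 1 else 0) + (if p.1 = q.1 + 1 ∧ p.2 = q.2 then 1 else 0) := by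
  have : Fact (1 < n) := ⟨hn⟩
  change ite (q.1 = p.1 ∨ (p.1 = q.1 + 1 ∧ p.2 = q.2)) _ _ = _
  by_cases h₁ : q.1 = p.1 <;> by_cases h₂ : p.1 = q.1 + 1 ∧ p.2 = q.2
  · have h := h₂.1
    rw [← h₁, left_eq_add] at h
    exact absurd h one_ne_zero
  · rw [if_pos (Or.inl h₁), if_pos h₁, if_neg h₂, add_zero]
  · rw [if_pos (Or.inr h₂), if_neg h₁, if_pos h₂, zero_add]
  · rw [if_neg (not_or.2 ⟨h₁, h₂⟩), if_neg h₁, if_neg h₂, add_zero]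

lemma WBiadj_mul_transpose [NeZero n] (hn : 2 ≤ n) :
    WBiadj n k R * (WBiadj n k R)ᵀ =
      (circulant (Pi.single 0 (k : R) + Pi.single 1 1 + Pi.single (-1) 1 : ZMod n → R)).submatrix
        Prod.fst Prod.fst + 1 := by
  ext ⟨i, a⟩ ⟨j, b⟩
  have h₁ : ∑ l : ZMod n, ∑ _c : Fin k, (if l = i then (1 : R) else 0) * (if l = j then 1 else 0) =
      if i - j = 0 then (k : R) else 0 := by
    rw [Fintype.sum_eq_single i fun l hl => by simp [hl]]
    by_cases h : i = j <;> simp [h, sub_eq_zero]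
  have h₂ : ∑ l : ZMod n, ∑ c : Fin k,
      (if i = l + 1 ∧ a = c then (1 : R) else 0) * (if l = j then 1 else 0) =
      if i - j = 1 then 1 else 0 := by
    rw [Fintype.sum_eq_single j fun l hl => by simp [hl]]
    by_cases h : i = j + 1 <;> simp [h, sub_eq_iff_eq_add']
  have h₃ : ∑ l : ZMod n, ∑ c : Fin k,
      (if l = i then (1 : R) else 0) * (if j = l + 1 ∧ b = c then 1 else 0) =
      if i - j = -1 then 1 else 0 := by
    rw [Fintype.sum_eq_single i fun l hl => by simp [hl]]
    have hij : i - j = -1 ↔ j = i + 1 := by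
      constructor <;> intro h <;> linear_combination -h
    by_cases h : j = i + 1 <;> simp [h, hij]
  have h₄ : ∑ l : ZMod n, ∑ c : Fin k,
      (if i = l + 1 ∧ a = c then (1 : R) else 0) * (if j = l + 1 ∧ b = c then 1 else 0) =
      (1 : Matrix (ZMod n × Fin k) (ZMod n × Fin k) R) (i, a) (j, b) := by
    rw [Fintype.sum_eq_single (i - 1) fun l hl => by
      simp [show i ≠ l + 1 from fun h => hl (eq_sub_of_add_eq h.symm)]]
    obtain rfl | h := eq_or_ne i j
    · simp [one_apply]
    · simp [one_apply, h, Ne.symm h]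
  simp only [mul_apply, transpose_apply, WBiadj_apply hn, add_mul, mul_add, sum_add_distrib,
    Fintype.sum_prod_type, h₁, h₂, h₃, h₄, Matrix.add_apply, submatrix_apply, circulant_apply,
    Pi.add_apply, Pi.single_apply]
  ring

end

/-- The characteristic polynomial of the adjacency matrix of `W_{n,k}` is
`(X² − 1)^((k−1)n) · ∏_{j=0}^{n−1} (X² − (k² + 1 + 2k cos(2πj/n)))`; i.e. the spectrum
consists of `±1`, each with multiplicity `(k−1)n`, together with the pairs `±τ_j`,
`τ_j = √(k² + 1 + 2k cos(2πj/n))` for `j = 0, …, n−1`. -/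
theorem W_charpoly (n k : ℕ) [NeZero n] (hn : 2 ≤ n) (hk : 2 ≤ k) :
    ((W n k).adjMatrix ℝ).charpoly =
      (X ^ 2 - 1) ^ ((k - 1) * n) *
        ∏ j ∈ Finset.range n,
          (X ^ 2 - C ((k : ℝ) ^ 2 + 1 + 2 * k * Real.cos (2 * Real.pi * j / n))) := by
  have : Nonempty (Fin k) := ⟨⟨0, by omega⟩⟩
  have hv : (k : ℝ) • (Pi.single 0 (k : ℝ) + Pi.single 1 1 + Pi.single (-1) 1 : ZMod n → ℝ) =
      Pi.single 0 ((k : ℝ) ^ 2) + Pi.single 1 (k : ℝ) + Pi.single (-1) (k : ℝ) := by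
    funext m
    simp [Pi.single_apply, sq, mul_add, mul_ite]
  rw [adjMatrix_W, charpoly_fromBlocks_zero₁₁_zero₂₂, WBiadj_mul_transpose hn, charpoly_add_one,
    charpoly_submatrix_fst, Fintype.card_fin, ZMod.card, ← circulant_smul, hv,
    ZMod.charpoly_circulant_cycle]
  simp only [mul_comp, pow_comp, X_comp, Polynomial.prod_comp, sub_comp, C_comp, one_comp,
    mul_comm n]
  congr 1
  refine prod_congr rfl fun j _ => ?_
  rw [sub_sub, ← C_1, ← C_add]
  congr 2
  ring
end

section
/- For all integers n ≥ 2 and k ≥ 2, both 1 and −1 are eigenvalues of the adjacency matrix of W_{n,k} over ℝ, each with algebraic multiplicity at least (k − 1)n. -/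
open Polynomial

/-! For `μ² = 1`, `i₀ : ℤ/nℤ` and `c : Fin k → K` with `∑ c = 0`, the vector equal to `c` on
the fibre `w_{i₀,·}`, to `μ • c` on `v_{i₀+1,·}` and to `0` elsewhere is a `μ`-eigenvector:
the complete bipartite blocks between `v_{i,·}` and `w_{i,·}` only see `∑ c = 0`, while the
matching `w_{i₀,j} ~ v_{i₀+1,j}` exchanges the two fibres. Taking `c = e_j - e_0` for `j ≠ 0`
gives `(k - 1)n` linearly independent eigenvectors, and the geometric multiplicity of an
eigenvalue is at most its algebraic multiplicity. -/

open Matrix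

namespace Matrix

variable {K m ι : Type*} [Field K] [Fintype m] [DecidableEq m] [Fintype ι]

theorem card_le_rootMultiplicity_charpoly_of_linearIndependent (A : Matrix m m K) {μ : K}
    {v : ι → m → K} (hv : LinearIndependent K v) (hAv : ∀ i, A *ᵥ v i = μ • v i) :
    Fintype.card ι ≤ A.charpoly.rootMultiplicity μ := by
  have hspan : Submodule.span K (Set.range v) ≤ Module.End.eigenspace (toLin' A) μ :=
    Submodule.span_le.mpr <| Set.range_subset_iff.mpr fun i =>
      Module.End.mem_eigenspace_iff.mpr (hAv i)
  calc Fintype.card ι = Module.finrank K (Submodule.span K (Set.range v)) :=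
        (finrank_span_eq_card hv).symm
    _ ≤ Module.finrank K (Module.End.eigenspace (toLin' A) μ) := Submodule.finrank_mono hspan
    _ ≤ (toLin' A).charpoly.rootMultiplicity μ := LinearMap.finrank_eigenspace_le _ _
    _ = A.charpoly.rootMultiplicity μ := by rw [charpoly_toLin']

end Matrix

section W

variable {n k : ℕ}

theorem W_adjMatrix_mulVec_inl {α : Type*} [NonAssocSemiring α] [NeZero n] [Fact (1 < n)]
    (x : WVert n k → α) (i : ZMod n) (j : Fin k) :
    ((W n k).adjMatrix α *ᵥ x) (Sum.inl (i, j)) =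
      ∑ l, x (Sum.inr (i, l)) + x (Sum.inr (i - 1, j)) := by
  have hsplit : ∀ q : ZMod n × Fin k,
      (if (W n k).Adj (Sum.inl (i, j)) (Sum.inr q) then x (Sum.inr q) else 0) =
        (if q.1 = i then x (Sum.inr q) else 0) + (if q = (i - 1, j) then x (Sum.inr q) else 0) := by
    rintro ⟨i', l⟩
    by_cases h : i' = i
    · subst h
      simp [W, WAdj, eq_comm (a := i'), sub_eq_self]
    · simp [W, WAdj, h, eq_sub_iff_add_eq, eq_comm]
  have hnone : ∀ q, ¬ (W n k).Adj (Sum.inl (i, j)) (Sum.inl q) := fun _ => id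
  simp only [mulVec, dotProduct, SimpleGraph.adjMatrix_apply, ite_mul, one_mul, zero_mul,
    Fintype.sum_sum_type, hnone, hsplit, if_false, Finset.sum_const_zero, zero_add,
    Finset.sum_add_distrib, Finset.sum_ite_eq', Finset.mem_univ, if_true]
  rw [Fintype.sum_prod_type_right]
  simp

theorem W_adjMatrix_mulVec_inr {α : Type*} [NonAssocSemiring α] [NeZero n] [Fact (1 < n)]
    (x : WVert n k → α) (i : ZMod n) (j : Fin k) :
    ((W n k).adjMatrix α *ᵥ x) (Sum.inr (i, j)) =
      ∑ l, x (Sum.inl (i, l)) + x (Sum.inl (i + 1, j)) := by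
  have hsplit : ∀ q : ZMod n × Fin k,
      (if (W n k).Adj (Sum.inr (i, j)) (Sum.inl q) then x (Sum.inl q) else 0) =
        (if q.1 = i then x (Sum.inl q) else 0) + (if q = (i + 1, j) then x (Sum.inl q) else 0) := by
    rintro ⟨i', l⟩
    by_cases h : i' = i
    · subst h
      simp [W, WAdj]
    · simp [W, WAdj, h, Ne.symm h]
  have hnone : ∀ q, ¬ (W n k).Adj (Sum.inr (i, j)) (Sum.inr q) := fun _ => id
  simp only [mulVec, dotProduct, SimpleGraph.adjMatrix_apply, ite_mul, one_mul, zero_mul,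
    Fintype.sum_sum_type, hnone, hsplit, if_false, Finset.sum_const_zero, add_zero,
    Finset.sum_add_distrib, Finset.sum_ite_eq', Finset.mem_univ, if_true]
  rw [Fintype.sum_prod_type_right]
  simp

def WEigenvector {R : Type*} [Mul R] [Zero R] (μ : R) (i₀ : ZMod n) (c : Fin k → R) :
    WVert n k → R
  | Sum.inl (i, j) => if i = i₀ + 1 then μ * c j else 0
  | Sum.inr (i, j) => if i = i₀ then c j else 0

theorem W_adjMatrix_mulVec_WEigenvector {R : Type*} [CommRing R] [NeZero n] [Fact (1 < n)]
    {μ : R} (hμ : μ * μ = 1) (i₀ : ZMod n) {c : Fin k → R} (hc : ∑ j, c j = 0) :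
    (W n k).adjMatrix R *ᵥ WEigenvector μ i₀ c = μ • WEigenvector μ i₀ c := by
  funext v
  rcases v with ⟨i, j⟩ | ⟨i, j⟩
  · rw [W_adjMatrix_mulVec_inl]
    simp [WEigenvector, sub_eq_iff_eq_add, hc, ← mul_assoc, hμ]
  · rw [W_adjMatrix_mulVec_inr]
    simp [WEigenvector, ← Finset.mul_sum, hc]

theorem linearIndependent_WEigenvector {R : Type*} [CommRing R] [NeZero n] (μ : R)
    (j₀ : Fin k) :
    LinearIndependent R fun p : ZMod n × {j // j ≠ j₀} =>
      WEigenvector μ p.1 (Pi.single (p.2 : Fin k) 1 - Pi.single j₀ 1) := by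
  refine LinearIndependent.of_comp (LinearMap.funLeft R R fun p : ZMod n × {j // j ≠ j₀} =>
    (Sum.inr (p.1, p.2.1) : WVert n k)) ?_
  convert Pi.linearIndependent_single_one (ZMod n × {j // j ≠ j₀}) R using 1
  ext p q
  simp [WEigenvector, Pi.single_apply, q.2.2, Prod.ext_iff, Subtype.ext_iff, ite_and]

theorem W_sub_one_mul_le_rootMultiplicity_charpoly {K : Type*} [Field K] [NeZero n] [NeZero k]
    [Fact (1 < n)] {μ : K} (hμ : μ * μ = 1) :
    (k - 1) * n ≤ ((W n k).adjMatrix K).charpoly.rootMultiplicity μ := by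
  have hcard : Fintype.card (ZMod n × {j : Fin k // j ≠ 0}) = (k - 1) * n := by
    simp [ZMod.card, mul_comm]
  rw [← hcard]
  refine card_le_rootMultiplicity_charpoly_of_linearIndependent _
    (linearIndependent_WEigenvector μ 0) fun p => ?_
  exact W_adjMatrix_mulVec_WEigenvector hμ p.1 (by simp [Finset.sum_sub_distrib])

end W

/-- Both `1` and `−1` are eigenvalues of `W_{n,k}`, each with algebraic multiplicity
(multiplicity as a root of the characteristic polynomial) at least `(k − 1)n`. -/
theorem W_pm_one_eigenvalues (n k : ℕ) [NeZero n] (hn : 2 ≤ n) (hk : 2 ≤ k) :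
    (1 : ℝ) ∈ spectrum ℝ ((W n k).adjMatrix ℝ) ∧
      (-1 : ℝ) ∈ spectrum ℝ ((W n k).adjMatrix ℝ) ∧
      (k - 1) * n ≤ ((W n k).adjMatrix ℝ).charpoly.rootMultiplicity 1 ∧
      (k - 1) * n ≤ ((W n k).adjMatrix ℝ).charpoly.rootMultiplicity (-1) := by
  have : Fact (1 < n) := ⟨hn⟩
  have : NeZero k := ⟨by omega⟩
  have hmult : ∀ μ : ℝ, μ * μ = 1 →
      (k - 1) * n ≤ ((W n k).adjMatrix ℝ).charpoly.rootMultiplicity μ :=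
    fun _ hμ => W_sub_one_mul_le_rootMultiplicity_charpoly hμ
  have hpos : 0 < (k - 1) * n := Nat.mul_pos (by omega) (by omega)
  have hspec : ∀ μ : ℝ, μ * μ = 1 → μ ∈ spectrum ℝ ((W n k).adjMatrix ℝ) := fun μ hμ =>
    mem_spectrum_iff_isRoot_charpoly.mpr <|
      (rootMultiplicity_pos (charpoly_monic _).ne_zero).mp (hpos.trans_le (hmult μ hμ))
  exact ⟨hspec 1 (by norm_num), hspec (-1) (by norm_num), hmult 1 (by norm_num),
    hmult (-1) (by norm_num)⟩
end

section
/- For every natural number N there exists a connected bipartite 3-regular simple graph G on more than N vertices such that the adjacency matrix of G over ℝ has no eigenvalue in the open interval (−1, 1). In other words, there are infinitely many connected cubic bipartite graphs with no eigenvalues in (−1, 1). -/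
/-!
Take a ring of `n` copies of the 4-cycle `K₂,₂`: vertex `(s, b, i)` lies on side `s` of the
`i`-th copy, and each `(false, b, i)` is also joined to `(true, !b, i + 1)`. This graph is cubic,
bipartite with sides given by `s`, and connected. Let `A` be its adjacency matrix. If `p, q` are
the values of a vector `v` on the vertices `(s, true, i), (s, false, i)`, the entries of `A v` on
the other side are `p i + q i + q (i ± 1)` and `q i + p i + p (i ± 1)`, and the sum of their
squares exceeds `∑ p i ² + q i ²` by `∑ (w i + w (i ± 1))²` with `w = p + q`. Hence
`‖A v‖ ≥ ‖v‖`, so every eigenvalue `μ` of `A` has `|μ| ≥ 1`.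
-/

open Matrix

theorem sum_sq_le_sum_sq_add_shift {Z : Type*} [AddGroup Z] [Fintype Z] (p q : Z → ℝ) (d : Z) :
    ∑ i, p i ^ 2 + ∑ i, q i ^ 2 ≤
      ∑ i, (p i + q i + q (i + d)) ^ 2 + ∑ i, (q i + p i + p (i + d)) ^ 2 := by
  set w := fun i => p i + q i
  set r := fun i => p i ^ 2 + q i ^ 2 - w i ^ 2
  -- The two sides differ by `∑ (w i + w (i + d))² + ∑ r (i + d) - ∑ r i`, and the last two
  -- sums agree because summation over a group is translation invariant.
  have hshift : ∑ i, r (i + d) = ∑ i, r i := Equiv.sum_comp (Equiv.addRight d) r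
  have hsq : 0 ≤ ∑ i, (w i + w (i + d)) ^ 2 := Finset.sum_nonneg fun i _ => sq_nonneg _
  have hrhs : ∑ i, (p i + q i + q (i + d)) ^ 2 + ∑ i, (q i + p i + p (i + d)) ^ 2 =
      ∑ i, (w i + w (i + d)) ^ 2 + ∑ i, r (i + d) + ∑ i, w i ^ 2 := by
    simp only [w, r, ← Finset.sum_add_distrib]
    exact Finset.sum_congr rfl fun i _ => by ring
  have hlhs : ∑ i, p i ^ 2 + ∑ i, q i ^ 2 = ∑ i, r i + ∑ i, w i ^ 2 := by
    simp only [r, ← Finset.sum_add_distrib]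
    exact Finset.sum_congr rfl fun i _ => by ring
  linarith

theorem Matrix.one_le_abs_of_mem_spectrum {ι : Type*} [Fintype ι] [DecidableEq ι]
    {A : Matrix ι ι ℝ} (hA : ∀ v, v ⬝ᵥ v ≤ A *ᵥ v ⬝ᵥ A *ᵥ v) {μ : ℝ}
    (hμ : μ ∈ spectrum ℝ A) : 1 ≤ |μ| := by
  rw [← Matrix.spectrum_toLin', ← Module.End.hasEigenvalue_iff_mem_spectrum] at hμ
  obtain ⟨v, hv, hv0⟩ := hμ.exists_hasEigenvector
  rw [Module.End.mem_eigenspace_iff, Matrix.toLin'_apply] at hv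
  have hAv := hA v
  rw [hv, smul_dotProduct, dotProduct_smul, smul_smul, smul_eq_mul, ← sq] at hAv
  rw [← one_le_sq_iff_one_le_abs]
  exact le_of_mul_le_mul_right (by rwa [one_mul]) (dotProduct_self_star_pos_iff.mpr hv0)

namespace SquareRing

def shift {n : ℕ} : Bool → ZMod n
  | false => 1
  | true => -1

lemma shift_not {n : ℕ} (s : Bool) : shift (n := n) (!s) = -shift s := by
  cases s <;> simp [shift]

def graph (n : ℕ) : SimpleGraph (Bool × Bool × ZMod n) where
  Adj u w := u.1 ≠ w.1 ∧ (w.2.2 = u.2.2 ∨ (w.2.1 = !u.2.1 ∧ w.2.2 = u.2.2 + shift u.1))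
  symm := ⟨by
    rintro ⟨s, b, i⟩ ⟨t, c, j⟩ ⟨hst, rfl | ⟨rfl, rfl⟩⟩
    · exact ⟨hst.symm, .inl rfl⟩
    · obtain rfl : t = !s := by cases s <;> cases t <;> simp_all
      exact ⟨hst.symm, .inr ⟨by simp, by simp [shift_not]⟩⟩⟩
  loopless := ⟨fun _ h => h.1 rfl⟩

variable {n : ℕ}

lemma graph_adj {s t b c : Bool} {i j : ZMod n} :
    (graph n).Adj (s, b, i) (t, c, j) ↔ s ≠ t ∧ (j = i ∨ (c = !b ∧ j = i + shift s)) :=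
  Iff.rfl

instance : DecidableRel (graph n).Adj := fun _ _ => by dsimp only [graph]; infer_instance

lemma neighborFinset_eq [NeZero n] (s b : Bool) (i : ZMod n) :
    (graph n).neighborFinset (s, b, i) = {(!s, b, i), (!s, !b, i), (!s, !b, i + shift s)} := by
  ext ⟨t, c, j⟩
  simp only [SimpleGraph.mem_neighborFinset, graph_adj, Prod.ext_iff, Finset.mem_insert,
    Finset.mem_singleton]
  cases s <;> cases t <;> cases b <;> cases c <;> simp [eq_comm]

lemma shift_ne_zero [Nontrivial (ZMod n)] (s : Bool) : shift (n := n) s ≠ 0 := by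
  cases s <;> simp [shift]

lemma neighbors_pairwise_ne [Nontrivial (ZMod n)] (s b : Bool) (i : ZMod n) :
    (!s, b, i) ∉ ({(!s, !b, i), (!s, !b, i + shift s)} : Finset _) ∧
      (!s, !b, i) ≠ (!s, !b, i + shift s) := by
  simp [Prod.ext_iff, shift_ne_zero]

lemma reachable_same_index (i : ZMod n) (s b : Bool) :
    (graph n).Reachable (false, false, i) (s, b, i) := by
  have h₁ : (graph n).Adj (false, false, i) (true, b, i) := graph_adj.2 ⟨by decide, .inl rfl⟩
  cases s
  · have h₂ : (graph n).Adj (false, b, i) (true, b, i) := graph_adj.2 ⟨by decide, .inl rfl⟩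
    exact h₁.reachable.trans h₂.reachable.symm
  · exact h₁.reachable

lemma colorable_two : (graph n).Colorable 2 :=
  (SimpleGraph.Coloring.mk (G := graph n) Prod.fst fun h => h.1).colorable

variable [NeZero n]

lemma isRegularOfDegree_three [Nontrivial (ZMod n)] : (graph n).IsRegularOfDegree 3 := by
  rintro ⟨s, b, i⟩
  obtain ⟨h₁, h₂⟩ := neighbors_pairwise_ne s b i
  rw [← SimpleGraph.card_neighborFinset_eq_degree, neighborFinset_eq,
    Finset.card_insert_of_notMem h₁, Finset.card_pair h₂]

lemma adjMatrix_mulVec_apply [Nontrivial (ZMod n)] (v : Bool × Bool × ZMod n → ℝ)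
    (s b : Bool) (i : ZMod n) :
    ((graph n).adjMatrix ℝ *ᵥ v) (s, b, i) =
      v (!s, b, i) + (v (!s, !b, i) + v (!s, !b, i + shift s)) := by
  obtain ⟨h₁, h₂⟩ := neighbors_pairwise_ne s b i
  rw [SimpleGraph.adjMatrix_mulVec_apply, neighborFinset_eq, Finset.sum_insert h₁,
    Finset.sum_pair h₂]

lemma connected : (graph n).Connected := by
  have base : ∀ k : ℕ, (graph n).Reachable (false, false, 0) (false, false, (k : ZMod n)) := by
    intro k
    induction k with
    | zero => simp
    | succ k ih =>
      have h : (graph n).Adj (false, false, (k : ZMod n)) (true, true, ((k + 1 : ℕ) : ZMod n)) :=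
        graph_adj.2 ⟨by decide, .inr ⟨rfl, by push_cast; rfl⟩⟩
      exact ih.trans (h.reachable.trans (reachable_same_index _ true true).symm)
  refine (SimpleGraph.connected_iff_exists_forall_reachable _).2 ⟨(false, false, 0), ?_⟩
  rintro ⟨s, b, i⟩
  simpa using (base i.val).trans (reachable_same_index _ s b)

lemma dotProduct_self_le_mulVec [Nontrivial (ZMod n)] (v : Bool × Bool × ZMod n → ℝ) :
    v ⬝ᵥ v ≤ (graph n).adjMatrix ℝ *ᵥ v ⬝ᵥ (graph n).adjMatrix ℝ *ᵥ v := by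
  have side : ∀ s, ∑ b, ∑ i, v (!s, b, i) ^ 2 ≤
      ∑ b, ∑ i, ((graph n).adjMatrix ℝ *ᵥ v) (s, b, i) ^ 2 := by
    intro s
    simpa only [Fintype.sum_bool, adjMatrix_mulVec_apply, Bool.not_true, Bool.not_false,
      add_assoc] using sum_sq_le_sum_sq_add_shift (fun i => v (!s, true, i))
        (fun i => v (!s, false, i)) (shift s)
  simp only [dotProduct, ← pow_two, Fintype.sum_prod_type]
  calc ∑ s, ∑ b, ∑ i, v (s, b, i) ^ 2 = ∑ s, ∑ b, ∑ i, v (!s, b, i) ^ 2 :=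
        (Equiv.sum_comp Equiv.boolNot fun s => ∑ b, ∑ i, v (s, b, i) ^ 2).symm
    _ ≤ _ := Finset.sum_le_sum fun s _ => side s

end SquareRing

/-- There are infinitely many connected cubic bipartite graphs with no eigenvalue in the
open interval `(−1, 1)`: for every `N` there is such a graph on more than `N` vertices. -/
theorem exists_large_cubic_bipartite_no_eigenvalue_near_zero (N : ℕ) :
    ∃ (V : Type) (_ : Fintype V) (_ : DecidableEq V) (G : SimpleGraph V)
      (_ : DecidableRel G.Adj),
      G.Connected ∧ G.Colorable 2 ∧ G.IsRegularOfDegree 3 ∧ N < Fintype.card V ∧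
        ∀ μ ∈ spectrum ℝ (G.adjMatrix ℝ), μ ∉ Set.Ioo (-1 : ℝ) 1 := by
  have : Fact (1 < N + 2) := ⟨by omega⟩
  refine ⟨_, inferInstance, inferInstance, SquareRing.graph (N + 2), inferInstance,
    SquareRing.connected, SquareRing.colorable_two, SquareRing.isRegularOfDegree_three,
    by simp only [Fintype.card_prod, Fintype.card_bool, ZMod.card]; omega,
    fun μ hμ hμ_small => ?_⟩
  have h_abs := Matrix.one_le_abs_of_mem_spectrum SquareRing.dotProduct_self_le_mulVec hμ
  exact (abs_lt.2 hμ_small).not_ge h_abs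
end

section
/- For every integer r ≥ 3 and every natural number N, there exists a connected bipartite r-regular simple graph G on more than N vertices such that: (i) every eigenvalue λ of the adjacency matrix of G over ℝ satisfies λ ∈ {−1, 1} or r − 2 ≤ λ ≤ r or −r ≤ λ ≤ −(r − 2); (ii) both 1 and −1 are eigenvalues of G; and (iii) the median eigenvalues of G are 1 and −1. -/
/-!
Take `q = r - 1` and glue `m` copies of `K_{q,q}` into a cycle by perfect matchings between
consecutive copies: a connected bipartite `r`-regular graph on `2mq` vertices. Its adjacency
matrix `A` satisfies `A²v = v + (a function constant on every side of every copy)`, so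
`A² - 1` has rank at most `2m`, and an eigenvector with `μ² ≠ 1` is itself constant on these
`2m` fibres. On such vectors `A²` acts as `1 + q² + q C` with `C` the adjacency operator of a
cycle, whose eigenvalues lie in `[-2, 2]`; this forces `q - 1 ≤ |μ| ≤ q + 1`. Hence at most `2m`
eigenvalues differ from `±1`, the spectrum is symmetric because the graph is bipartite, and since
`2m < 2mq` the two median eigenvalues are `1` and `-1`.
-/

open Finset Matrix Polynomial

lemma Antitone.eq_of_countP {k : ℕ} {lam : Fin k → ℝ} (hlam : Antitone lam) (i : Fin k) {c : ℝ}
    (hgt : (univ.val.map lam).countP (c < ·) ≤ i)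
    (hlt : (univ.val.map lam).countP (· < c) < k - i) : lam i = c := by
  simp only [Multiset.countP_map] at hgt hlt
  change #{j | c < lam j} ≤ i at hgt
  change #{j | lam j < c} < k - i at hlt
  by_contra hne
  rcases lt_or_gt_of_ne hne with hi | hi
  · have : Ici i ⊆ ({j | lam j < c} : Finset (Fin k)) := fun j hj => by
      simpa using (hlam (mem_Ici.mp hj)).trans_lt hi
    have := card_le_card this
    rw [Fin.card_Ici] at this
    omega
  · have : Iic i ⊆ ({j | c < lam j} : Finset (Fin k)) := fun j hj => by
      simpa using hi.trans_le (hlam (mem_Iic.mp hj))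
    have := card_le_card this
    rw [Fin.card_Iic] at this
    omega

lemma Multiset.countP_comp_neg_of_map_neg {s : Multiset ℝ} (hs : s.map Neg.neg = s)
    (p : ℝ → Prop) [DecidablePred p] : s.countP (fun x => p (-x)) = s.countP p := by
  conv_rhs => rw [← hs]
  rw [Multiset.countP_map, Multiset.countP_eq_card_filter]

theorem Antitone.median_eq_one_neg_one {k : ℕ} {lam : Fin k → ℝ} (hlam : Antitone lam)
    {s : Multiset ℝ} (hs : univ.val.map lam = s) (hsymm : s.map Neg.neg = s)
    (hgap : ∀ x ∈ s, 1 ≤ |x|) (hfew : s.countP (1 < |·|) < k) (i : Fin k) :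
    ((i : ℕ) + 1 = (k + 1) / 2 → lam i = 1) ∧ ((i : ℕ) + 1 = (k + 2) / 2 → lam i = -1) := by
  subst hs
  have hbig : (univ.val.map lam).countP (· < -1) = (univ.val.map lam).countP (1 < ·) := by
    rw [← Multiset.countP_comp_neg_of_map_neg hsymm]
    exact Multiset.countP_congr rfl fun x _ => propext neg_lt_neg_iff
  have hsmall : (univ.val.map lam).countP (· < 1) = (univ.val.map lam).countP (1 ≤ ·) := by
    rw [← Multiset.countP_comp_neg_of_map_neg hsymm]
    refine Multiset.countP_congr rfl fun x hx => propext ?_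
    have := hgap x hx
    constructor <;> intro h <;> cases abs_cases x <;> linarith
  have hpos : (univ.val.map lam).countP (-1 < ·) = (univ.val.map lam).countP (1 ≤ ·) := by
    refine Multiset.countP_congr rfl fun x hx => propext ?_
    have := hgap x hx
    constructor <;> intro h <;> cases abs_cases x <;> linarith
  have habs : (univ.val.map lam).countP (1 < |·|)
      = (univ.val.map lam).countP (1 < ·) + (univ.val.map lam).countP (· < -1) := by
    rw [Multiset.countP_eq_countP_filter_add _ _ (1 < ·), Multiset.countP_filter,
      Multiset.countP_filter]
    congr 1 <;> refine Multiset.countP_congr rfl fun x _ => propext ?_ <;>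
      constructor <;> intro h <;> cases abs_cases x <;> (try constructor) <;> linarith
  have hsplit := Multiset.card_eq_countP_add_countP (1 ≤ ·) (univ.val.map lam)
  simp only [not_le, Multiset.card_map, card_val, card_univ, Fintype.card_fin] at hsplit
  -- with `n` values `≥ 1` and `a` values `> 1` these give `k = 2n` and `a < n`, so the values at
  -- the indices `n - 1` and `n` are `1` and `-1`
  refine ⟨fun hi => hlam.eq_of_countP i ?_ ?_, fun hi => hlam.eq_of_countP i ?_ ?_⟩ <;> omega

lemma abs_le_two_mul_of_mul_eq_mul_add {ι : Type*} [Finite ι] {f : ι → ℝ} (hf : f ≠ 0)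
    {σ τ : ι → ι} {c d : ℝ} (h : ∀ x, c * f x = d * (f (σ x) + f (τ x))) : |c| ≤ 2 * |d| := by
  obtain ⟨y, hy⟩ := Function.ne_iff.mp hf
  have : Nonempty ι := ⟨y⟩
  obtain ⟨x, hx⟩ := Finite.exists_max (|f ·|)
  have hpos : 0 < |f x| := (abs_pos.mpr hy).trans_le (hx y)
  refine le_of_mul_le_mul_right ?_ hpos
  calc |c| * |f x| = |d| * |f (σ x) + f (τ x)| := by rw [← abs_mul, h, abs_mul]
    _ ≤ |d| * (|f x| + |f x|) :=
      mul_le_mul_of_nonneg_left ((abs_add_le _ _).trans (add_le_add (hx _) (hx _))) (abs_nonneg d)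
    _ = 2 * |d| * |f x| := by ring

namespace Matrix.IsHermitian

variable {𝕜 : Type*} [RCLike 𝕜] {n : Type*} [Fintype n] [DecidableEq n] {A : Matrix n n 𝕜}

lemma roots_charpoly_neg (hA : A.IsHermitian) :
    (-A).charpoly.roots = A.charpoly.roots.map Neg.neg := by
  have hneg : (-A).charpoly = ∏ i, (X - C (-hA.eigenvalues i : 𝕜)) := by
    conv_lhs => rw [hA.spectral_theorem, ← map_neg, Unitary.conjStarAlgAut_apply,
      charpoly_mul_comm, ← mul_assoc]
    simp [charpoly_diagonal]
  rw [hA.roots_charpoly_eq_eigenvalues, hneg,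
    roots_prod _ _ (prod_ne_zero_iff.mpr fun i _ => X_sub_C_ne_zero _)]
  simp [Multiset.map_map]

lemma rank_mul_self_sub_one (hA : A.IsHermitian) :
    (A * A - 1).rank = Fintype.card {i // hA.eigenvalues i ^ 2 ≠ 1} := by
  conv_lhs => rw [hA.spectral_theorem, ← map_mul,
    ← map_one (Unitary.conjStarAlgAut 𝕜 _ hA.eigenvectorUnitary), ← map_sub,
    Unitary.conjStarAlgAut_apply, ← Unitary.coe_star]
  simp only [diagonal_mul_diagonal, Function.comp_apply, ← diagonal_one, diagonal_sub,
    UnitaryGroup.det_isUnit, rank_mul_eq_left_of_isUnit_det, rank_mul_eq_right_of_isUnit_det,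
    rank_diagonal]
  refine Fintype.card_congr (Equiv.subtypeEquivRight fun i => ?_)
  rw [ne_eq, sub_eq_zero, ← RCLike.ofReal_mul, ← RCLike.ofReal_one, RCLike.ofReal_inj, ← sq]

end Matrix.IsHermitian

theorem SimpleGraph.Coloring.charpoly_neg_adjMatrix {V R : Type*} [Fintype V] [DecidableEq V]
    [CommRing R] {G : SimpleGraph V} [DecidableRel G.Adj] (C : G.Coloring Bool) :
    (-G.adjMatrix R).charpoly = (G.adjMatrix R).charpoly := by
  let D : Matrix V V R := diagonal fun v => if C v then 1 else -1
  have hD : D * D = 1 := by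
    rw [diagonal_mul_diagonal, ← diagonal_one]
    congr 1 with v
    split_ifs <;> simp
  have hDAD : D * G.adjMatrix R * D = -G.adjMatrix R := by
    ext v w
    rw [mul_diagonal, diagonal_mul, neg_apply, adjMatrix_apply]
    by_cases hadj : G.Adj v w
    · have := C.valid hadj
      cases hv : C v <;> cases hw : C w <;> simp_all
    · simp [hadj]
  rw [← hDAD, charpoly_mul_comm, ← mul_assoc, hD, one_mul]

/-- `m` copies of the complete bipartite graph `K_{q,q}` arranged in a cycle: `(false, i, j)`
lies in the left part of copy `i` and is also matched to `(true, i + 1, j)`. -/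
def bicliqueCycle (m q : ℕ) : SimpleGraph (Bool × ZMod m × ZMod q) where
  Adj v w := (v.1 = false ∧ w.1 = true ∧ (w.2 = (v.2.1 + 1, v.2.2) ∨ w.2.1 = v.2.1)) ∨
    (w.1 = false ∧ v.1 = true ∧ (v.2 = (w.2.1 + 1, w.2.2) ∨ v.2.1 = w.2.1))
  symm := ⟨fun _ _ h => h.symm⟩
  loopless := ⟨fun _ h => by rcases h with ⟨h₁, h₂, -⟩ | ⟨h₁, h₂, -⟩ <;> simp_all⟩

namespace bicliqueCycle

variable {m q : ℕ}

lemma adj_iff {v w : Bool × ZMod m × ZMod q} : (bicliqueCycle m q).Adj v w ↔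
    (v.1 = false ∧ w.1 = true ∧ (w.2 = (v.2.1 + 1, v.2.2) ∨ w.2.1 = v.2.1)) ∨
      (w.1 = false ∧ v.1 = true ∧ (v.2 = (w.2.1 + 1, w.2.2) ∨ v.2.1 = w.2.1)) := Iff.rfl

instance : DecidableRel (bicliqueCycle m q).Adj := fun _ _ => decidable_of_iff' _ adj_iff

lemma adj_false_true (i : ZMod m) (j j' : ZMod q) :
    (bicliqueCycle m q).Adj (false, i, j) (true, i, j') :=
  adj_iff.2 <| Or.inl ⟨rfl, rfl, Or.inr rfl⟩

lemma adj_false_true_add_one (i : ZMod m) (j : ZMod q) :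
    (bicliqueCycle m q).Adj (false, i, j) (true, i + 1, j) :=
  adj_iff.2 <| Or.inl ⟨rfl, rfl, Or.inl rfl⟩

def sideColoring : (bicliqueCycle m q).Coloring Bool :=
  SimpleGraph.Coloring.mk Prod.fst fun h => by
    rcases adj_iff.1 h with ⟨h₁, h₂, -⟩ | ⟨h₁, h₂, -⟩ <;> simp_all

lemma colorable : (bicliqueCycle m q).Colorable 2 := by
  simpa using sideColoring.colorable

lemma reachable_of_fst_eq {v w : Bool × ZMod m × ZMod q} (h : v.2.1 = w.2.1) :
    (bicliqueCycle m q).Reachable v w := by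
  suffices ∀ v : Bool × ZMod m × ZMod q, (bicliqueCycle m q).Reachable v (true, v.2.1, 0) from
    (this v).trans (h ▸ this w).symm
  rintro ⟨_ | _, i, j⟩
  · exact (adj_false_true i j 0).reachable
  · exact (adj_false_true i 0 j).reachable.symm.trans (adj_false_true i 0 0).reachable

lemma connected [NeZero m] : (bicliqueCycle m q).Connected := by
  have hsucc (i : ZMod m) : (bicliqueCycle m q).Reachable (false, i, 0) (false, i + 1, 0) :=
    (adj_false_true_add_one i 0).reachable.trans (reachable_of_fst_eq rfl)
  have hbase (n : ℕ) : (bicliqueCycle m q).Reachable (false, 0, 0) (false, n, 0) := by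
    induction n with
    | zero => simp
    | succ n ih => simpa using ih.trans (hsucc n)
  refine SimpleGraph.connected_iff_exists_forall_reachable _ |>.mpr ⟨(false, 0, 0), fun v => ?_⟩
  exact (hbase v.2.1.val).trans (reachable_of_fst_eq (by simp))

lemma roots_charpoly_adjMatrix_map_neg [NeZero m] [NeZero q] :
    ((bicliqueCycle m q).adjMatrix ℝ).charpoly.roots.map Neg.neg =
      ((bicliqueCycle m q).adjMatrix ℝ).charpoly.roots := by
  rw [← (SimpleGraph.isHermitian_adjMatrix ℝ _).roots_charpoly_neg,
    sideColoring.charpoly_neg_adjMatrix]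

def fibre (b : Bool) (i : ZMod m) : ZMod q ↪ Bool × ZMod m × ZMod q :=
  ⟨fun j => (b, i, j), fun _ _ h => by simpa using h⟩

@[simp] lemma fibre_apply (b : Bool) (i : ZMod m) (j : ZMod q) : fibre b i j = (b, i, j) := rfl

variable [NeZero q]

def fibreSum (v : Bool × ZMod m × ZMod q → ℝ) (b : Bool) (i : ZMod m) : ℝ :=
  ∑ j, v (b, i, j)

/-- It has zero sum on every fibre, so `A` acts on it only through the matching edges between the
fibres `(false, 0)` and `(true, 1)`. -/
def pmVector (μ : ℝ) : Bool × ZMod m × ZMod q → ℝ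
  | (b, i, j) => (bif b then (if i = 1 then μ else 0) else if i = 0 then 1 else 0) *
    (Pi.single 0 1 - Pi.single 1 1 : ZMod q → ℝ) j

lemma fibreSum_pmVector (μ : ℝ) (b : Bool) (i : ZMod m) :
    fibreSum (pmVector (q := q) μ) b i = 0 := by
  simp [fibreSum, pmVector, ← mul_sum, sum_sub_distrib]

variable [Fact (1 < m)]

lemma neighborFinset_false (i : ZMod m) (j : ZMod q) :
    (bicliqueCycle m q).neighborFinset (false, i, j) =
      cons (true, i + 1, j) (univ.map (fibre true i)) (by simp) := by
  ext ⟨b, i', j'⟩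
  cases b <;> simp [adj_iff, eq_comm]

lemma neighborFinset_true (i : ZMod m) (j : ZMod q) :
    (bicliqueCycle m q).neighborFinset (true, i, j) =
      cons (false, i - 1, j) (univ.map (fibre false i)) (by simp [eq_sub_iff_add_eq]) := by
  ext ⟨b, i', j'⟩
  cases b <;> simp [adj_iff, eq_comm, eq_sub_iff_add_eq]

lemma isRegularOfDegree : (bicliqueCycle m q).IsRegularOfDegree (q + 1) := by
  rintro ⟨_ | _, i, j⟩ <;>
    simp [← SimpleGraph.card_neighborFinset_eq_degree, neighborFinset_false,
      neighborFinset_true, -cons_eq_insert]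

lemma adjMatrix_mulVec_false (v : Bool × ZMod m × ZMod q → ℝ) (i : ZMod m) (j : ZMod q) :
    ((bicliqueCycle m q).adjMatrix ℝ *ᵥ v) (false, i, j) =
      v (true, i + 1, j) + fibreSum v true i := by
  rw [SimpleGraph.adjMatrix_mulVec_apply, neighborFinset_false, sum_cons, sum_map]
  rfl

lemma adjMatrix_mulVec_true (v : Bool × ZMod m × ZMod q → ℝ) (i : ZMod m) (j : ZMod q) :
    ((bicliqueCycle m q).adjMatrix ℝ *ᵥ v) (true, i, j) =
      v (false, i - 1, j) + fibreSum v false i := by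
  rw [SimpleGraph.adjMatrix_mulVec_apply, neighborFinset_true, sum_cons, sum_map]
  rfl

lemma adjMatrix_mulVec_mulVec (v : Bool × ZMod m × ZMod q → ℝ) (b : Bool) (i : ZMod m)
    (j : ZMod q) :
    ((bicliqueCycle m q).adjMatrix ℝ *ᵥ ((bicliqueCycle m q).adjMatrix ℝ *ᵥ v)) (b, i, j) =
      v (b, i, j) + (q * fibreSum v b i + fibreSum v b (i - 1) + fibreSum v b (i + 1)) := by
  cases b <;>
    simp only [adjMatrix_mulVec_false, adjMatrix_mulVec_true, fibreSum, sum_add_distrib] <;>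
    simp <;> ring

lemma rank_adjMatrix_mul_self_sub_one_le :
    ((bicliqueCycle m q).adjMatrix ℝ * (bicliqueCycle m q).adjMatrix ℝ - 1).rank ≤ 2 * m := by
  let π : Bool × ZMod m × ZMod q → Bool × ZMod m := fun x => (x.1, x.2.1)
  have hrange : LinearMap.range
      ((bicliqueCycle m q).adjMatrix ℝ * (bicliqueCycle m q).adjMatrix ℝ - 1).mulVecLin ≤
        LinearMap.range (LinearMap.funLeft ℝ ℝ π) := by
    rintro _ ⟨v, rfl⟩
    refine ⟨fun p => q * fibreSum v p.1 p.2 + fibreSum v p.1 (p.2 - 1) +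
      fibreSum v p.1 (p.2 + 1), ?_⟩
    ext ⟨b, i, j⟩
    simp only [mulVecLin_apply, sub_mulVec, ← mulVec_mulVec, one_mulVec, Pi.sub_apply,
      adjMatrix_mulVec_mulVec, add_sub_cancel_left, LinearMap.funLeft_apply, π]
  calc _ ≤ Module.finrank ℝ (LinearMap.range (LinearMap.funLeft ℝ ℝ π)) :=
        Submodule.finrank_mono hrange
    _ ≤ Module.finrank ℝ (Bool × ZMod m → ℝ) := LinearMap.finrank_range_le _
    _ = 2 * m := by simp

lemma sq_eq_one_or_abs_mem_Icc_of_mulVec_eq_smul {μ : ℝ} {v : Bool × ZMod m × ZMod q → ℝ}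
    (hv : v ≠ 0) (h : (bicliqueCycle m q).adjMatrix ℝ *ᵥ v = μ • v) :
    μ ^ 2 = 1 ∨ |μ| ∈ Set.Icc ((q : ℝ) - 1) (q + 1) := by
  refine or_iff_not_imp_left.2 fun hμ => ?_
  have key (b i j) : (μ ^ 2 - 1) * v (b, i, j) =
      q * fibreSum v b i + fibreSum v b (i - 1) + fibreSum v b (i + 1) := by
    have := adjMatrix_mulVec_mulVec v b i j
    rw [h, mulVec_smul, h] at this
    simp only [Pi.smul_apply, smul_eq_mul] at this
    linear_combination this
  -- as `μ² ≠ 1`, `key` shows that `v` is constant on fibres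
  have hconst (b i j) : v (b, i, j) = v (b, i, 0) :=
    mul_left_cancel₀ (sub_ne_zero.2 hμ) ((key b i j).trans (key b i 0).symm)
  have hsum (b i) : fibreSum v b i = q * v (b, i, 0) := by simp [fibreSum, hconst b i]
  obtain ⟨b, hb⟩ : ∃ b, (fun i => v (b, i, 0)) ≠ 0 := by
    by_contra! h0
    exact hv (funext fun ⟨b, i, j⟩ => (hconst b i j).trans (congrFun (h0 b) i))
  have hcycle := abs_le_two_mul_of_mul_eq_mul_add hb (σ := (· - 1)) (τ := (· + 1))
    (c := μ ^ 2 - 1 - q ^ 2) (d := q) fun i => by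
      have := key b i 0
      rw [hsum, hsum, hsum] at this
      linear_combination this
  rw [Nat.abs_cast, abs_le] at hcycle
  have hq : (1 : ℝ) ≤ q := by exact_mod_cast NeZero.one_le
  constructor <;> nlinarith [sq_abs μ, abs_nonneg μ]

lemma sq_eq_one_or_abs_mem_Icc_of_mem_spectrum {μ : ℝ}
    (hμ : μ ∈ spectrum ℝ ((bicliqueCycle m q).adjMatrix ℝ)) :
    μ ^ 2 = 1 ∨ |μ| ∈ Set.Icc ((q : ℝ) - 1) (q + 1) := by
  have hA := SimpleGraph.isHermitian_adjMatrix ℝ (bicliqueCycle m q)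
  obtain ⟨w, rfl⟩ := hA.spectrum_real_eq_range_eigenvalues ▸ hμ
  exact sq_eq_one_or_abs_mem_Icc_of_mulVec_eq_smul ((WithLp.ofLp_eq_zero 2).ne.2
    (hA.eigenvectorBasis.orthonormal.ne_zero w)) (hA.mulVec_eigenvectorBasis w)

lemma adjMatrix_mulVec_pmVector {μ : ℝ} (hμ : μ ^ 2 = 1) :
    (bicliqueCycle m q).adjMatrix ℝ *ᵥ pmVector μ = μ • pmVector μ := by
  ext ⟨_ | _, i, j⟩
  · rw [adjMatrix_mulVec_false, fibreSum_pmVector]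
    by_cases hi : i = 0 <;> simp [pmVector, hi]
  · rw [adjMatrix_mulVec_true, fibreSum_pmVector]
    by_cases hi : i = 1 <;> simp [pmVector, hi, sub_eq_zero]
    rw [← mul_assoc, ← sq, hμ, one_mul]

lemma mem_spectrum_of_sq_eq_one [Fact (1 < q)] {μ : ℝ} (hμ : μ ^ 2 = 1) :
    μ ∈ spectrum ℝ ((bicliqueCycle m q).adjMatrix ℝ) := by
  rw [← Matrix.spectrum_toLin', ← Module.End.hasEigenvalue_iff_mem_spectrum]
  refine Module.End.hasEigenvalue_of_hasEigenvector (x := pmVector μ) ⟨?_, fun h => ?_⟩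
  · rw [Module.End.mem_eigenspace_iff, toLin'_apply, adjMatrix_mulVec_pmVector hμ]
  · simpa [pmVector] using congrFun h (false, 0, 0)

lemma one_le_abs_of_mem_roots_charpoly_adjMatrix [Fact (1 < q)] {x : ℝ}
    (hx : x ∈ ((bicliqueCycle m q).adjMatrix ℝ).charpoly.roots) : 1 ≤ |x| := by
  have hq : (2 : ℝ) ≤ q := by exact_mod_cast (Fact.out : 1 < q)
  rcases sq_eq_one_or_abs_mem_Icc_of_mem_spectrum
    (mem_spectrum_iff_isRoot_charpoly.2 (isRoot_of_mem_roots hx)) with h | h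
  · nlinarith [sq_abs x, abs_nonneg x]
  · linarith [h.1]

lemma countP_roots_charpoly_adjMatrix_le :
    ((bicliqueCycle m q).adjMatrix ℝ).charpoly.roots.countP (1 < |·|) ≤ 2 * m := by
  have hA := SimpleGraph.isHermitian_adjMatrix ℝ (bicliqueCycle m q)
  rw [hA.roots_charpoly_eq_eigenvalues, Multiset.countP_map]
  calc _ ≤ Fintype.card {w // hA.eigenvalues w ^ 2 ≠ 1} := by
        rw [Fintype.card_subtype]
        refine card_le_card (monotone_filter_right _ fun w _ h => ?_)
        simp only [Function.comp_apply, RCLike.ofReal_real_eq_id, id] at h ⊢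
        nlinarith [sq_abs (hA.eigenvalues w), abs_nonneg (hA.eigenvalues w)]
    _ = _ := hA.rank_mul_self_sub_one.symm
    _ ≤ 2 * m := rank_adjMatrix_mul_self_sub_one_le

end bicliqueCycle

/-- For every `r ≥ 3` there are infinitely many connected `r`-regular bipartite graphs
whose eigenvalues all lie in `{−1, 1} ∪ [r−2, r] ∪ [−r, −(r−2)]`, which have both `1`
and `−1` as eigenvalues, and whose median eigenvalues (the `⌊(N+1)/2⌋`-th and
`⌈(N+1)/2⌉`-th eigenvalues in nonincreasing order, `N` the order) are `1` and `−1`. -/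
theorem exists_large_regular_bipartite_median_pm_one (r : ℕ) (hr : 3 ≤ r) (N : ℕ) :
    ∃ (V : Type) (_ : Fintype V) (_ : DecidableEq V) (G : SimpleGraph V)
      (_ : DecidableRel G.Adj),
      G.Connected ∧ G.Colorable 2 ∧ G.IsRegularOfDegree r ∧ N < Fintype.card V ∧
      (∀ μ ∈ spectrum ℝ (G.adjMatrix ℝ),
          μ = -1 ∨ μ = 1 ∨ ((r : ℝ) - 2 ≤ μ ∧ μ ≤ (r : ℝ)) ∨
            (-(r : ℝ) ≤ μ ∧ μ ≤ -((r : ℝ) - 2))) ∧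
      (1 : ℝ) ∈ spectrum ℝ (G.adjMatrix ℝ) ∧
      (-1 : ℝ) ∈ spectrum ℝ (G.adjMatrix ℝ) ∧
      ∀ lam : Fin (Fintype.card V) → ℝ, Antitone lam →
        (G.adjMatrix ℝ).charpoly = ∏ i, (X - C (lam i)) →
        ∀ i : Fin (Fintype.card V),
          ((i : ℕ) + 1 = (Fintype.card V + 1) / 2 → lam i = 1) ∧
          ((i : ℕ) + 1 = (Fintype.card V + 2) / 2 → lam i = -1) := by
  obtain ⟨q, rfl⟩ : ∃ q, r = q + 1 := ⟨r - 1, by omega⟩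
  have : Fact (1 < q) := ⟨by omega⟩
  have : Fact (1 < N + 2) := ⟨by omega⟩
  have hcard : Fintype.card (Bool × ZMod (N + 2) × ZMod q) = 2 * ((N + 2) * q) := by
    simp [ZMod.card]
  refine ⟨_, inferInstance, inferInstance, bicliqueCycle (N + 2) q, inferInstance,
    bicliqueCycle.connected, bicliqueCycle.colorable, bicliqueCycle.isRegularOfDegree,
    by rw [hcard]; nlinarith, fun μ hμ => ?_, bicliqueCycle.mem_spectrum_of_sq_eq_one (by norm_num),
    bicliqueCycle.mem_spectrum_of_sq_eq_one (by norm_num), fun lam hlam hchar => ?_⟩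
  · push_cast
    rcases bicliqueCycle.sq_eq_one_or_abs_mem_Icc_of_mem_spectrum hμ with h | ⟨h₁, h₂⟩
    · rw [sq_eq_one_iff] at h
      tauto
    · rcases abs_cases μ with ⟨h, -⟩ | ⟨h, -⟩ <;> rw [h] at h₁ h₂
      · exact Or.inr (Or.inr (Or.inl ⟨by linarith, by linarith⟩))
      · exact Or.inr (Or.inr (Or.inr ⟨by linarith, by linarith⟩))
  · refine hlam.median_eq_one_neg_one (s := ((bicliqueCycle (N + 2) q).adjMatrix ℝ).charpoly.roots)
      ?_ bicliqueCycle.roots_charpoly_adjMatrix_map_neg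
      (fun _ => bicliqueCycle.one_le_abs_of_mem_roots_charpoly_adjMatrix) ?_
    · rw [hchar, roots_prod _ _ (prod_ne_zero_iff.mpr fun i _ => X_sub_C_ne_zero _)]
      simp
    · rw [hcard]
      nlinarith [bicliqueCycle.countP_roots_charpoly_adjMatrix_le (m := N + 2) (q := q)]
end

section
/- Let n ≥ 2 and k ≥ 2 be integers, let α = √(k/2 + (1/2)√(k² − 4)) and β = 1/α, and let Q be the real n × (nk) matrix with rows indexed by ℤ/nℤ and columns indexed by (ℤ/nℤ) × {1, …, k}, defined by Q_{r,(i,j)} = α if i = r, Q_{r,(i,j)} = β if i = r − 1 (mod n), and Q_{r,(i,j)} = 0 otherwise. Then for all r, r' ∈ ℤ/nℤ, the (r, r') entry of Q·Qᵀ equals k²·[r = r'] + k·([r' = r + 1 (mod n)] + [r' = r − 1 (mod n)]), where [P] denotes 1 if P holds and 0 otherwise. (For n ≥ 3 this says Q·Qᵀ = k²·I_n + k·A(C_n), where A(C_n) is the adjacency matrix of the n-cycle.) -/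
open Polynomial

/-- With `α = √(k/2 + (1/2)√(k² − 4))`, `β = 1/α`, and `Q` the `n × nk` matrix with
`Q r (i,j) = α` if `i = r`, `= β` if `i = r − 1 (mod n)` and `= 0` otherwise, the matrix
`Q·Qᵀ` has entries `(Q·Qᵀ) r r' = k²·[r = r'] + k·([r' = r + 1] + [r' = r − 1])`
(i.e. `Q·Qᵀ = k²·I_n + k·A(C_n)`). -/
theorem QQT_entries (n k : ℕ) [NeZero n] (hn : 2 ≤ n) (hk : 2 ≤ k)
    (α β : ℝ)
    (hα : α = Real.sqrt ((k : ℝ) / 2 + Real.sqrt ((k : ℝ) ^ 2 - 4) / 2))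
    (hβ : β = 1 / α)
    (Q : Matrix (ZMod n) (ZMod n × Fin k) ℝ)
    (hQ : ∀ (r : ZMod n) (p : ZMod n × Fin k),
      Q r p = if p.1 = r then α else if p.1 = r - 1 then β else 0)
    (r r' : ZMod n) :
    (Q * Q.transpose) r r' =
      (k : ℝ) ^ 2 * (if r = r' then 1 else 0) +
        (k : ℝ) * ((if r' = r + 1 then 1 else 0) + (if r' = r - 1 then 1 else 0)) := by
  haveI : Fact (1 < n) := ⟨hn⟩
  have hone : (1 : ZMod n) ≠ 0 := one_ne_zero
  have hk4 : (0:ℝ) ≤ (k:ℝ)^2 - 4 := by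
    have : (2:ℝ) ≤ (k:ℝ) := by exact_mod_cast hk
    nlinarith
  have hs : Real.sqrt ((k:ℝ)^2 - 4) ^ 2 = (k:ℝ)^2 - 4 := Real.sq_sqrt hk4
  have hsnn : 0 ≤ Real.sqrt ((k:ℝ)^2 - 4) := Real.sqrt_nonneg _
  have hargnn : 0 < (k:ℝ)/2 + Real.sqrt ((k:ℝ)^2 - 4) / 2 := by
    have : (2:ℝ) ≤ (k:ℝ) := by exact_mod_cast hk
    linarith
  have hαpos : 0 < α := by rw [hα]; exact Real.sqrt_pos.mpr hargnn
  have hα2 : α ^ 2 = (k:ℝ)/2 + Real.sqrt ((k:ℝ)^2 - 4) / 2 := by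
    rw [hα]; exact Real.sq_sqrt (le_of_lt hargnn)
  have hαβ : α * β = 1 := by
    rw [hβ]; field_simp
  have hsum2 : α ^ 2 + β ^ 2 = (k:ℝ) := by
    have hβ2 : β ^ 2 * α ^ 2 = 1 := by
      rw [hβ]; field_simp
    nlinarith [hα2, hs, hβ2]
  -- reduce the matrix entry
  rw [Matrix.mul_apply, Fintype.sum_prod_type]
  have hinner : ∀ i : ZMod n, (∑ j : Fin k, Q r (i, j) * Q.transpose (i, j) r')
      = (k:ℝ) * ((if i = r then α else if i = r - 1 then β else 0) *
        (if i = r' then α else if i = r' - 1 then β else 0)) := by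
    intro i
    have hterm : ∀ j : Fin k, Q r (i, j) * Q.transpose (i, j) r' =
        (if i = r then α else if i = r - 1 then β else 0) *
        (if i = r' then α else if i = r' - 1 then β else 0) := by
      intro j
      rw [Matrix.transpose_apply, hQ, hQ]
    rw [Finset.sum_congr rfl (fun j _ => hterm j), Fin.sum_const, nsmul_eq_mul]
  simp only [hinner]
  set f : ZMod n → ℝ := fun i => (k:ℝ) * ((if i = r then α else if i = r - 1 then β else 0) *
    (if i = r' then α else if i = r' - 1 then β else 0)) with hf
  have hrr1 : r ≠ r - 1 := by
    intro h
    exact hone (by linear_combination h)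
  have hzero : ∀ x ∈ Finset.univ, x ∉ ({r, r - 1} : Finset (ZMod n)) → f x = 0 := by
    intro x _ hx
    simp only [Finset.mem_insert, Finset.mem_singleton, not_or] at hx
    simp [hf, hx.1, hx.2]
  rw [← Finset.sum_subset (Finset.subset_univ {r, r - 1}) hzero,
    Finset.sum_pair hrr1]
  simp only [hf, if_neg (Ne.symm hrr1), eq_self_iff_true, if_true]
  have c1 : (r = r' - 1) = (r' = r + 1) := by
    apply propext; constructor <;> intro h <;> linear_combination -h
  have c2 : (r - 1 = r') = (r' = r - 1) := by
    apply propext; exact eq_comm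
  have c3 : (r - 1 = r' - 1) = (r = r') := by
    apply propext; constructor <;> intro h <;> linear_combination h
  simp only [c1, c2, c3]
  have himp1 : r = r' → r' = r + 1 → False := by
    intro h1 h2; exact hone (by linear_combination -h1 - h2)
  have himp2 : r = r' → r' = r - 1 → False := by
    intro h1 h2; exact hone (by linear_combination h1 + h2)
  by_cases h1 : r = r'
  · have h2 : ¬ (r' = r + 1) := fun h => himp1 h1 h
    have h3 : ¬ (r' = r - 1) := fun h => himp2 h1 h
    simp only [if_pos h1, if_neg h2, if_neg h3]
    linear_combination (k:ℝ) * hsum2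
  · simp only [if_neg h1]
    split_ifs <;>
      first
        | linear_combination 2 * (k:ℝ) * hαβ
        | linear_combination (k:ℝ) * hαβ
        | ring
end

section
/- Let n ≥ 2 and k ≥ 2 be integers, let α = √(k/2 + (1/2)√(k² − 4)) and β = 1/α, and let Q be the real n × (nk) matrix with rows indexed by ℤ/nℤ and columns indexed by (ℤ/nℤ) × {1, …, k}, defined by Q_{r,(i,j)} = α if i = r, Q_{r,(i,j)} = β if i = r − 1 (mod n), and Q_{r,(i,j)} = 0 otherwise. Then for all (i,j) and (i',j') in (ℤ/nℤ) × {1, …, k}, the ((i,j),(i',j')) entry of Qᵀ·Q equals k·[i = i'] + [i' = i + 1 (mod n)] + [i' = i − 1 (mod n)], where [P] denotes 1 if P holds and 0 otherwise. Equivalently, Qᵀ·Q = k·I_{nk} + A_V, where A_V is the nk × nk matrix with (A_V)_{(i,j),(i',j')} = k if i = i' and j ≠ j', (A_V)_{(i,j),(i',j')} = [i' = i + 1 (mod n)] + [i' = i − 1 (mod n)] if i ≠ i', and (A_V)_{(i,j),(i,j)} = 0. -/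
open Polynomial

/-- With `α = √(k/2 + (1/2)√(k² − 4))`, `β = 1/α`, and `Q` the `n × nk` matrix with
`Q r (i,j) = α` if `i = r`, `= β` if `i = r − 1 (mod n)` and `= 0` otherwise, the matrix
`Qᵀ·Q` has entries `(Qᵀ·Q) (i,j) (i',j') = k·[i = i'] + [i' = i + 1] + [i' = i − 1]`
(i.e. `Qᵀ·Q = k·I_{nk} + A_V`). -/
theorem QTQ_entries (n k : ℕ) [NeZero n] (hn : 2 ≤ n) (hk : 2 ≤ k)
    (α β : ℝ)
    (hα : α = Real.sqrt ((k : ℝ) / 2 + Real.sqrt ((k : ℝ) ^ 2 - 4) / 2))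
    (hβ : β = 1 / α)
    (Q : Matrix (ZMod n) (ZMod n × Fin k) ℝ)
    (hQ : ∀ (r : ZMod n) (p : ZMod n × Fin k),
      Q r p = if p.1 = r then α else if p.1 = r - 1 then β else 0)
    (p q : ZMod n × Fin k) :
    (Q.transpose * Q) p q =
      (k : ℝ) * (if p.1 = q.1 then 1 else 0) +
        ((if q.1 = p.1 + 1 then 1 else 0) + (if q.1 = p.1 - 1 then 1 else 0)) := by
  have hk2 : (2:ℝ) ≤ (k:ℝ) := by exact_mod_cast hk
  have hk4 : (4:ℝ) ≤ (k:ℝ)^2 := by nlinarith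
  set s := Real.sqrt ((k : ℝ) ^ 2 - 4) with hs
  have hs0 : 0 ≤ s := Real.sqrt_nonneg _
  have hs2 : s ^ 2 = (k:ℝ)^2 - 4 := Real.sq_sqrt (by linarith)
  have hargpos : 0 < (k:ℝ)/2 + s/2 := by linarith
  have hα2 : α ^ 2 = (k:ℝ)/2 + s/2 := by rw [hα]; exact Real.sq_sqrt hargpos.le
  have hαpos : 0 < α := by rw [hα]; exact Real.sqrt_pos.mpr hargpos
  have hαβ : α * β = 1 := by rw [hβ]; field_simp
  have hsum : α ^ 2 + β ^ 2 = (k:ℝ) := by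
    rw [hβ]
    field_simp
    nlinarith [hα2, hs2]
  haveI : Fact (1 < n) := ⟨hn⟩
  have h10 : (1 : ZMod n) ≠ 0 := one_ne_zero
  have hne : p.1 ≠ p.1 + 1 := by
    intro h
    exact h10 (left_eq_add.mp h)
  rw [Matrix.mul_apply]
  simp only [Matrix.transpose_apply]
  rw [Finset.sum_eq_add_of_mem p.1 (p.1 + 1) (Finset.mem_univ _) (Finset.mem_univ _) hne ?_]
  · have e1 : Q p.1 p = α := by rw [hQ]; simp
    have e2 : Q (p.1+1) p = β := by
      rw [hQ]
      rw [if_neg hne, if_pos (by ring)]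
    have e3 : Q p.1 q = if q.1 = p.1 then α else if q.1 = p.1 - 1 then β else 0 := by
      rw [hQ]
    have e4 : Q (p.1+1) q = if q.1 = p.1 + 1 then α else if q.1 = p.1 then β else 0 := by
      rw [hQ]
      congr 2
      rw [add_sub_cancel_right]
    rw [e1, e2, e3, e4]
    by_cases hq1 : q.1 = p.1
    · have hq2 : ¬ q.1 = p.1 + 1 := by rw [hq1]; exact hne
      have hq3 : ¬ q.1 = p.1 - 1 := by
        rw [hq1]; intro h
        exact h10 (by linear_combination h)
      rw [if_pos hq1, if_neg hq2, if_pos hq1, if_pos hq1.symm, if_neg hq2, if_neg hq3]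
      linear_combination hsum
    · by_cases hq2 : q.1 = p.1 + 1
      · by_cases hq3 : q.1 = p.1 - 1
        · rw [if_neg hq1, if_pos hq3, if_pos hq2, if_pos hq2, if_pos hq3,
            if_neg (fun h => hq1 h.symm)]
          linear_combination 2 * hαβ
        · rw [if_neg hq1, if_neg hq3, if_pos hq2, if_pos hq2, if_neg hq3,
            if_neg (fun h => hq1 h.symm)]
          linear_combination hαβ
      · by_cases hq3 : q.1 = p.1 - 1
        · rw [if_neg hq1, if_pos hq3, if_neg hq2, if_neg hq1, if_neg hq2, if_pos hq3,
            if_neg (fun h => hq1 h.symm)]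
          linear_combination hαβ
        · rw [if_neg hq1, if_neg hq3, if_neg hq2, if_neg hq1, if_neg hq2, if_neg hq3,
            if_neg (fun h => hq1 h.symm)]
          ring
  · intro r _ hr
    have h1 : p.1 ≠ r := fun h => hr.1 h.symm
    have h2 : p.1 ≠ r - 1 := by
      intro h
      exact hr.2 (by rw [h]; ring)
    rw [hQ r p, if_neg h1, if_neg h2, zero_mul]
end

section
/- Let n ≥ 2 and k ≥ 2 be integers and let A_V be the real nk × nk matrix with rows and columns indexed by (ℤ/nℤ) × {1, …, k} whose entries are: (A_V)_{(i,j),(i',j')} = k if i = i' and j ≠ j'; (A_V)_{(i,j),(i',j')} = [i' = i + 1 (mod n)] + [i' = i − 1 (mod n)] if i ≠ i'; and (A_V)_{(i,j),(i,j)} = 0 (here [P] is 1 if P holds and 0 otherwise). Then the characteristic polynomial of A_V equals (X + k)^{n(k−1)} · ∏_{j=0}^{n−1} ( X − (k² − k + 2k·cos(2πj/n)) ). Equivalently, the eigenvalues of A_V are k² + 2k·cos(2πj/n) − k for j = 0, …, n−1, together with −k with multiplicity n(k−1). -/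
/-!
Over `ℂ`, `A_V = (C + k I) ⊗ J − k I`, where `C` is the adjacency matrix of the `n`-cycle and
`J` the all-ones `k × k` matrix. The discrete Fourier transform on `ℤ/nℤ` diagonalises the
circulant `C + k I`, with eigenvalues `k + 2 cos(2πj/n)`. For any `n × n` matrix `M`, writing
`M ⊗ J = U V` with `V U = k M`, the identity `X^n χ(UV) = X^{nk} χ(VU)` shows that `M ⊗ J` has
the eigenvalues of `k M` together with `0` of multiplicity `n(k−1)`; the final shift by `−k`
gives the claim.
-/

open Polynomial Matrix ZMod

namespace ZMod

variable {n : ℕ} [NeZero n]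

lemma prod_range_natCast {M : Type*} [CommMonoid M] (f : ZMod n → M) :
    ∏ j ∈ Finset.range n, f j = ∏ x : ZMod n, f x :=
  Finset.prod_nbij' (fun j => (j : ZMod n)) ZMod.val (by simp) (by simp [ZMod.val_lt])
    (fun j hj => ZMod.val_cast_of_lt (Finset.mem_range.mp hj)) (by simp) (fun _ _ => rfl)

lemma stdAddChar_natCast_add_neg (j : ℕ) :
    stdAddChar (j : ZMod n) + stdAddChar (-(j : ZMod n)) =
      2 * Real.cos (2 * Real.pi * j / n) := by
  rw [← Int.cast_natCast, ← Int.cast_neg, stdAddChar_coe, stdAddChar_coe, Complex.ofReal_cos,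
    Complex.two_cos]
  push_cast
  ring_nf

lemma dft_single_s12 (a : ZMod n) (b : ℂ) (k : ZMod n) :
    𝓕 (Pi.single a b) k = stdAddChar (-(a * k)) * b := by
  simp [dft_apply, Pi.single_apply]

lemma dft_circulant_mulVec (v Φ : ZMod n → ℂ) : 𝓕 (circulant v *ᵥ Φ) = 𝓕 v * 𝓕 Φ := by
  ext k
  simp only [dft_apply, mulVec, dotProduct, circulant_apply, smul_eq_mul, Pi.mul_apply,
    Finset.mul_sum]
  rw [Finset.sum_comm]
  refine Finset.sum_congr rfl fun j _ => ?_
  rw [Finset.sum_mul, ← Equiv.sum_comp (Equiv.addRight j)]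
  refine Finset.sum_congr rfl fun d _ => ?_
  simp only [Equiv.coe_addRight, add_sub_cancel_right, add_mul, neg_add, AddChar.map_add_eq_mul]
  ring

end ZMod

theorem Matrix.charpoly_circulant_zmod {n : ℕ} [NeZero n] (v : ZMod n → ℂ) :
    (circulant v).charpoly = ∏ k, (X - C (𝓕 v k)) := by
  have hconj : (𝓕 : (ZMod n → ℂ) ≃ₗ[ℂ] _).conj (toLin' (circulant v)) =
      toLin' (diagonal (𝓕 v)) := by
    refine LinearMap.ext fun Φ => ?_
    rw [LinearEquiv.conj_apply_apply, toLin'_apply, toLin'_apply, dft_circulant_mulVec,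
      LinearEquiv.apply_symm_apply]
    exact funext fun i => (mulVec_diagonal _ _ i).symm
  rw [← charpoly_toLin', ← LinearEquiv.charpoly_conj 𝓕, hconj, charpoly_toLin',
    charpoly_diagonal]

theorem Matrix.charpoly_submatrix_fst_s12 {R ι κ : Type*} [CommRing R] [Fintype ι] [DecidableEq ι]
    [Fintype κ] [DecidableEq κ] [Nonempty κ] (M : Matrix ι ι R) :
    (M.submatrix Prod.fst Prod.fst : Matrix (ι × κ) (ι × κ) R).charpoly =
      X ^ (Fintype.card ι * (Fintype.card κ - 1)) * ((Fintype.card κ : R) • M).charpoly := by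
  let U : Matrix (ι × κ) ι R := M.submatrix Prod.fst id
  let V : Matrix ι (ι × κ) R := of fun i q => if i = q.1 then 1 else 0
  have hUV : U * V = M.submatrix Prod.fst Prod.fst := by
    ext p q; simp [U, V, mul_apply]
  have hVU : V * U = (Fintype.card κ : R) • M := by
    ext i i'; simp [U, V, mul_apply, Fintype.sum_prod_type]
  have h := charpoly_mul_comm' U V
  rw [hUV, hVU, Fintype.card_prod] at h
  obtain ⟨m, hm⟩ := Nat.exists_eq_add_one.mpr (Fintype.card_pos (α := κ))
  refine (isRegular_X_pow (Fintype.card ι)).left ?_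
  dsimp only
  rw [h, hm, Nat.add_sub_cancel]
  ring

/-- `circulant (cycleKernel n a b) = a I + b C`, with `C` the adjacency matrix of the `n`-cycle. -/
noncomputable def cycleKernel (n : ℕ) (a b : ℂ) : ZMod n → ℂ :=
  Pi.single (-1) b + Pi.single 1 b + Pi.single 0 a

lemma cycleKernel_sub_apply {n : ℕ} [Fact (1 < n)] (a b : ℂ) (i i' : ZMod n) :
    cycleKernel n a b (i - i') =
      if i = i' then a else (if i' = i + 1 then b else 0) + (if i' = i - 1 then b else 0) := by
  have h1 : (1 : ZMod n) ≠ 0 := one_ne_zero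
  have hsucc : i - i' = -1 ↔ i' = i + 1 := by constructor <;> intro h <;> linear_combination -h
  have hpred : i - i' = 1 ↔ i' = i - 1 := by constructor <;> intro h <;> linear_combination -h
  by_cases hi : i = i'
  · subst hi
    simp [cycleKernel, h1]
  · simp [cycleKernel, Pi.single_apply, hi, hsucc, hpred, sub_eq_zero]

lemma smul_cycleKernel (n : ℕ) (c a b : ℂ) :
    c • cycleKernel n a b = cycleKernel n (c * a) (c * b) := by
  simp only [cycleKernel, smul_add, ← Pi.single_smul', smul_eq_mul]

theorem charpoly_circulant_cycleKernel {n : ℕ} [NeZero n] (a b : ℂ) :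
    (circulant (cycleKernel n a b)).charpoly =
      ∏ j ∈ Finset.range n, (X - C (a + 2 * b * Real.cos (2 * Real.pi * j / n))) := by
  rw [charpoly_circulant_zmod, ← prod_range_natCast]
  refine Finset.prod_congr rfl fun j _ => ?_
  have hcos := stdAddChar_natCast_add_neg (n := n) j
  congr 2
  simp only [cycleKernel, map_add, Pi.add_apply, dft_single_s12, neg_mul, one_mul, neg_neg, zero_mul,
    neg_zero, AddChar.map_zero_eq_one]
  linear_combination b * hcos

/-- The matrix `A_V` (indexed by `(ℤ/nℤ) × {1,…,k}`, with entries `k` between distinct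
vertices with the same first index, `[i' = i+1] + [i' = i−1]` between vertices with
distinct first indices, and `0` on the diagonal) has characteristic polynomial
`(X + k)^{n(k−1)} · ∏_{j=0}^{n−1} (X − (k² − k + 2k cos(2πj/n)))`; i.e. its eigenvalues
are `k² + 2k cos(2πj/n) − k` for `j = 0,…,n−1` together with `−k` with multiplicity
`n(k−1)`. -/
theorem AV_charpoly (n k : ℕ) [NeZero n] (hn : 2 ≤ n) (hk : 2 ≤ k)
    (AV : Matrix (ZMod n × Fin k) (ZMod n × Fin k) ℝ)
    (hAV : ∀ p q : ZMod n × Fin k,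
      AV p q =
        if p.1 = q.1 then (if p.2 = q.2 then 0 else (k : ℝ))
        else (if q.1 = p.1 + 1 then 1 else 0) + (if q.1 = p.1 - 1 then 1 else 0)) :
    AV.charpoly =
      (X + C (k : ℝ)) ^ (n * (k - 1)) *
        ∏ j ∈ Finset.range n,
          (X - C ((k : ℝ) ^ 2 - k + 2 * k * Real.cos (2 * Real.pi * j / n))) := by
  have : Nonempty (Fin k) := ⟨⟨0, by omega⟩⟩
  have : Fact (1 < n) := ⟨hn⟩
  have hsplit : AV.map Complex.ofRealHom =
      (circulant (cycleKernel n k 1)).submatrix Prod.fst Prod.fst - scalar _ (k : ℂ) := by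
    ext ⟨i, a⟩ ⟨i', a'⟩
    simp only [map_apply, hAV, Matrix.sub_apply, submatrix_apply, circulant_apply,
      cycleKernel_sub_apply, scalar_apply, diagonal_apply, Prod.mk.injEq]
    by_cases hi : i = i'
    · by_cases ha : a = a' <;> simp [hi, ha]
    · simp only [hi, false_and, if_false, sub_zero]
      split_ifs <;> simp
  apply Polynomial.map_injective Complex.ofRealHom Complex.ofReal_injective
  rw [← charpoly_map, hsplit, charpoly_sub_scalar, charpoly_submatrix_fst_s12, ZMod.card,
    Fintype.card_fin, ← circulant_smul, smul_cycleKernel, charpoly_circulant_cycleKernel]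
  simp only [mul_comp, pow_comp, X_comp, prod_comp, sub_comp, C_comp, Polynomial.map_mul,
    Polynomial.map_pow, Polynomial.map_prod, Polynomial.map_sub, Polynomial.map_add, map_X,
    map_C, Complex.ofRealHom_eq_coe]
  refine congr_arg₂ (· * ·) (by simp) (Finset.prod_congr rfl fun j _ => ?_)
  push_cast
  simp only [map_sub, map_add, map_mul, map_pow, map_one]
  ring
end
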